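/- Let G = (N, M_0, F) be a bounded plant and B a CI-BRG of G with basis partition (T_E, T_I). If every basis marking M_b of B satisfies R_I(M_b) ∩ F ≠ ∅ (i.e., the i-maximal marking of every basis marking is final), then G is non-blocking. -/

import Mathlib

/-- A Petri net with `m` places and `n` transitions. -/
structure PetriNet (m n : ℕ) where
  Pre : Fin m → Fin n → ℕ
  Post : Fin m → Fin n → ℕ

namespace PetriNet

variable {m n : ℕ}

/-- Incidence matrix `C = Post - Pre`. -/
def C (N : PetriNet m n) (p : Fin m) (t : Fin n) : ℤ :=
  (N.Post p t : ℤ) - (N.Pre p t : ℤ)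

/-- Transition `t` is enabled at marking `M`. -/
def enabled (N : PetriNet m n) (M : Fin m → ℕ) (t : Fin n) : Prop :=
  ∀ p, N.Pre p t ≤ M p

/-- Firing transition `t` at marking `M`. -/
def fire (N : PetriNet m n) (M : Fin m → ℕ) (t : Fin n) : Fin m → ℕ :=
  fun p => M p + N.Post p t - N.Pre p t

/-- `fires N M σ M'` : the sequence `σ` is firable at `M` and yields `M'`. -/
inductive fires (N : PetriNet m n) : (Fin m → ℕ) → List (Fin n) → (Fin m → ℕ) → Prop
  | nil (M : Fin m → ℕ) : fires N M [] M
  | cons {M M' : Fin m → ℕ} {t : Fin n} {σ : List (Fin n)} :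
      N.enabled M t → fires N (N.fire M t) σ M' → fires N M (t :: σ) M'

/-- Firing vector of a sequence. -/
def fvec (σ : List (Fin n)) : Fin n → ℕ := fun t => σ.count t

/-- Arcs of the subnet induced by transition set `TI` (full net for `TI = Set.univ`). -/
def arc (N : PetriNet m n) (TI : Set (Fin n)) :
    (Fin m ⊕ Fin n) → (Fin m ⊕ Fin n) → Prop
  | Sum.inl p, Sum.inr t => t ∈ TI ∧ 0 < N.Pre p t
  | Sum.inr t, Sum.inl p => t ∈ TI ∧ 0 < N.Post p t
  | _, _ => False

/-- The subnet induced by `TI` is acyclic: no directed cycle. -/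
def SubnetAcyclic (N : PetriNet m n) (TI : Set (Fin n)) : Prop :=
  ∀ x, ¬ Relation.TransGen (N.arc TI) x x

/-- Transitions in structural conflict. -/
def Tconf (N : PetriNet m n) : Set (Fin n) :=
  {t | ∃ p, 0 < N.Pre p t ∧ ∃ t', t' ≠ t ∧ 0 < N.Pre p t'}

/-- `TI` is non-conflicting: `TI ⊆ T \ T_conf`. -/
def NonConflicting (N : PetriNet m n) (TI : Set (Fin n)) : Prop :=
  ∀ t ∈ TI, t ∉ N.Tconf

/-- `TI` is non-increasing w.r.t. the GMEC weight vector `w`. -/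
def NonIncreasing (N : PetriNet m n) (w : Fin m → ℤ) (TI : Set (Fin n)) : Prop :=
  ∀ t ∈ TI, ∑ p, w p * N.C p t ≤ 0

/-- The `TI`-induced subnet is conflict-free: every place has at most one
output transition among `TI`. -/
def ConflictFreeSubnet (N : PetriNet m n) (TI : Set (Fin n)) : Prop :=
  ∀ p : Fin m, ∀ t ∈ TI, ∀ t' ∈ TI, 0 < N.Pre p t → 0 < N.Pre p t' → t = t'

/-- `σ` consists only of transitions in `TI`. -/
def ImplicitSeq (TI : Set (Fin n)) (σ : List (Fin n)) : Prop := ∀ t ∈ σ, t ∈ TI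

/-- Implicit reach of a marking `Mb`. -/
def RI (N : PetriNet m n) (TI : Set (Fin n)) (Mb : Fin m → ℕ) : Set (Fin m → ℕ) :=
  {M | ∃ σ, ImplicitSeq TI σ ∧ N.fires Mb σ M}

/-- Reachability set. -/
def Reach (N : PetriNet m n) (M0 : Fin m → ℕ) : Set (Fin m → ℕ) :=
  {M | ∃ σ, N.fires M0 σ M}

/-- State equation `M' = M + C·y` (the nonnegativity `M' ≥ 0` is implicit in
`M' : Fin m → ℕ`). -/
def stateEq (N : PetriNet m n) (M : Fin m → ℕ) (y : Fin n → ℕ) (M' : Fin m → ℕ) : Prop :=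
  ∀ p, (M' p : ℤ) = (M p : ℤ) + ∑ t, N.C p t * (y t : ℤ)

/-- `σ` is an explanation of `t` at `M`: an implicit sequence after which `t`
is enabled. -/
def IsExplanation (N : PetriNet m n) (TI : Set (Fin n)) (M : Fin m → ℕ)
    (t : Fin n) (σ : List (Fin n)) : Prop :=
  ImplicitSeq TI σ ∧ ∃ M', N.fires M σ M' ∧ N.enabled M' t

/-- `y` is a minimal explanation vector of `t` at `M`. -/
def MinExplVec (N : PetriNet m n) (TI : Set (Fin n)) (M : Fin m → ℕ)
    (t : Fin n) (y : Fin n → ℕ) : Prop :=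
  (∃ σ, N.IsExplanation TI M t σ ∧ fvec σ = y) ∧
    ∀ σ', N.IsExplanation TI M t σ' → ¬ fvec σ' < y

/-- `y` is the firing vector of some implicit sequence firable at `M`. -/
def FirableVec (N : PetriNet m n) (TI : Set (Fin n)) (M : Fin m → ℕ)
    (y : Fin n → ℕ) : Prop :=
  ∃ σ M', ImplicitSeq TI σ ∧ fvec σ = y ∧ N.fires M σ M'

/-- `y` is a maximal implicit firing vector at `M`. -/
def MaximalIFV (N : PetriNet m n) (TI : Set (Fin n)) (M : Fin m → ℕ)
    (y : Fin n → ℕ) : Prop :=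
  N.FirableVec TI M y ∧ ∀ y', N.FirableVec TI M y' → ¬ y < y'

/-- `y` is the maximal implicit firing vector at `M`, dominating all others. -/
def GreatestIFV (N : PetriNet m n) (TI : Set (Fin n)) (M : Fin m → ℕ)
    (y : Fin n → ℕ) : Prop :=
  N.FirableVec TI M y ∧ ∀ y', N.FirableVec TI M y' → y' ≤ y

/-- One step of the BRG: fire a minimal explanation followed by an explicit
transition `t ∉ TI`. -/
def BRGstep (N : PetriNet m n) (TI : Set (Fin n)) (M1 M2 : Fin m → ℕ) : Prop :=
  ∃ t ∉ TI, ∃ y, N.MinExplVec TI M1 t y ∧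
    ∀ p, (M2 p : ℤ) = (M1 p : ℤ) + (∑ s, N.C p s * (y s : ℤ)) + N.C p t

/-- `Mb` is a basis marking of the BRG with initial marking `M0`. -/
def Basis (N : PetriNet m n) (TI : Set (Fin n)) (M0 Mb : Fin m → ℕ) : Prop :=
  Relation.ReflTransGen (N.BRGstep TI) M0 Mb

/-- A marking is dead if it enables no transition. -/
def Dead (N : PetriNet m n) (M : Fin m → ℕ) : Prop := ∀ t, ¬ N.enabled M t

/-- Final markings of the GMEC `(w, k)`. -/
def Final (w : Fin m → ℤ) (k : ℤ) (M : Fin m → ℕ) : Prop :=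
  ∑ p, w p * (M p : ℤ) ≤ k

/-- The plant is non-blocking. -/
def NonBlocking (N : PetriNet m n) (M0 : Fin m → ℕ) (w : Fin m → ℤ) (k : ℤ) : Prop :=
  ∀ M ∈ N.Reach M0, ∃ M' ∈ N.Reach M, Final w k M'

/-- Boundedness of the marked net. -/
def Bounded (N : PetriNet m n) (M0 : Fin m → ℕ) : Prop :=
  ∃ K, ∀ M ∈ N.Reach M0, ∀ p, M p ≤ K

end PetriNet

open PetriNet

/-! Implicit transitions share no input place with any other transition, so implicit firing
sequences commute with everything up to reordering: two runs from one marking, the second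
implicit, can be joined, and an explicit transition can be moved past an implicit run. Hence
every reachable marking lies in the implicit reach of a basis marking (an explicit step becomes
a BRG step along a minimal explanation), and that implicit reach is confluent. A reachable `M`
and a final `Mf` in the same implicit reach therefore have a common implicit successor, which is
final because implicit transitions do not increase `w · M`. -/

namespace PetriNet

variable {m n : ℕ} {N : PetriNet m n} {TI : Set (Fin n)}

theorem fires.append {M M₁ M₂ : Fin m → ℕ} {σ₁ σ₂ : List (Fin n)}
    (h₁ : N.fires M σ₁ M₁) (h₂ : N.fires M₁ σ₂ M₂) : N.fires M (σ₁ ++ σ₂) M₂ := by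
  induction h₁ with
  | nil => exact h₂
  | cons he _ ih => exact .cons he (ih h₂)

theorem fires_singleton {M : Fin m → ℕ} {t : Fin n} (h : N.enabled M t) :
    N.fires M [t] (N.fire M t) :=
  .cons h (.nil _)

theorem mem_RI_self (M : Fin m → ℕ) : M ∈ N.RI TI M :=
  ⟨[], by simp [ImplicitSeq], .nil M⟩

theorem RI_subset_Reach (M : Fin m → ℕ) : N.RI TI M ⊆ N.Reach M :=
  fun _ ⟨σ, _, hf⟩ => ⟨σ, hf⟩

theorem fvec_cons (t : Fin n) (σ : List (Fin n)) (s : Fin n) :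
    fvec (t :: σ) s = fvec σ s + if t = s then 1 else 0 := by
  simp only [fvec, List.count_cons, beq_iff_eq]

theorem fvec_erase (t : Fin n) (σ : List (Fin n)) (s : Fin n) :
    fvec (σ.erase t) s = fvec σ s - if t = s then 1 else 0 := by
  simp only [fvec, List.count_erase, beq_iff_eq]

theorem fvec_append (σ₁ σ₂ : List (Fin n)) : fvec (σ₁ ++ σ₂) = fvec σ₁ + fvec σ₂ := by
  funext s
  simp [fvec, List.count_append]

theorem coe_fire {M : Fin m → ℕ} {t : Fin n} (h : N.enabled M t) (p : Fin m) :
    (N.fire M t p : ℤ) = M p + N.C p t := by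
  have := h p
  simp only [fire, C]
  omega

theorem fires.stateEq {M M' : Fin m → ℕ} {σ : List (Fin n)} (h : N.fires M σ M') :
    N.stateEq M (fvec σ) M' := by
  induction h with
  | nil => intro p; simp [fvec]
  | @cons M M' t σ he _ ih =>
    intro p
    rw [ih p, coe_fire he]
    simp only [fvec_cons, Nat.cast_add, mul_add, Finset.sum_add_distrib, Nat.cast_ite,
      Nat.cast_one, Nat.cast_zero, mul_ite, mul_one, mul_zero, Finset.sum_ite_eq,
      Finset.mem_univ, if_true]
    ring

theorem fires.eq_of_fvec_eq {M M₁ M₂ : Fin m → ℕ} {σ₁ σ₂ : List (Fin n)}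
    (h₁ : N.fires M σ₁ M₁) (h₂ : N.fires M σ₂ M₂) (hv : fvec σ₁ = fvec σ₂) : M₁ = M₂ := by
  funext p
  have := h₁.stateEq p
  rw [hv, ← h₂.stateEq p] at this
  exact_mod_cast this

namespace NonConflicting

variable (hnc : N.NonConflicting TI)
include hnc

theorem pre_eq_zero {s t : Fin n} (hs : s ∈ TI) (hts : t ≠ s) (p : Fin m)
    (hp : 0 < N.Pre p s) : N.Pre p t = 0 :=
  Nat.eq_zero_of_not_pos fun ht => hnc s hs ⟨p, hp, t, hts, ht⟩

theorem enabled_fire_of_mem_left {M : Fin m → ℕ} {s t : Fin n} (hs : s ∈ TI) (hts : t ≠ s)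
    (het : N.enabled M t) : N.enabled (N.fire M s) t := by
  intro p
  have := het p
  have := hnc.pre_eq_zero hs hts p
  simp only [fire]
  omega

theorem enabled_fire_of_mem_right {M : Fin m → ℕ} {s t : Fin n} (hs : s ∈ TI) (hts : t ≠ s)
    (hes : N.enabled M s) : N.enabled (N.fire M t) s := by
  intro p
  have := hes p
  have := hnc.pre_eq_zero hs hts p
  simp only [fire]
  omega

theorem fire_comm {M : Fin m → ℕ} {s t : Fin n} (hs : s ∈ TI) (hts : t ≠ s)
    (hes : N.enabled M s) (het : N.enabled M t) :
    N.fire (N.fire M s) t = N.fire (N.fire M t) s := by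
  funext p
  have := hes p
  have := het p
  have := hnc.pre_eq_zero hs hts p
  simp only [fire]
  omega

theorem exists_fires_erase {M M' : Fin m → ℕ} {σ : List (Fin n)} {t : Fin n}
    (hσ : ImplicitSeq TI σ) (hf : N.fires M σ M') (ht : N.enabled M t) :
    ∃ M'', N.fires (N.fire M t) (σ.erase t) M'' := by
  induction hf with
  | nil => exact ⟨_, .nil _⟩
  | @cons M M' s σ hes hf ih =>
    have hs : s ∈ TI := hσ s List.mem_cons_self
    by_cases hts : t = s
    · subst hts
      exact ⟨M', by rwa [List.erase_cons_head]⟩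
    obtain ⟨M'', hf''⟩ :=
      ih (fun u hu => hσ u (List.mem_cons_of_mem s hu)) (hnc.enabled_fire_of_mem_left hs hts ht)
    rw [List.erase_cons_tail (by rw [beq_iff_eq]; exact Ne.symm hts)]
    refine ⟨M'', .cons (hnc.enabled_fire_of_mem_right hs hts hes) ?_⟩
    rwa [← hnc.fire_comm hs hts hes ht]

theorem exists_fires_fvec_add_eq_sup {M M₁ M₂ : Fin m → ℕ} {σ₁ σ₂ : List (Fin n)}
    (hσ₂ : ImplicitSeq TI σ₂) (h₁ : N.fires M σ₁ M₁) (h₂ : N.fires M σ₂ M₂) :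
    ∃ σ' M', ImplicitSeq TI σ' ∧ N.fires M₁ σ' M' ∧ fvec σ₁ + fvec σ' = fvec σ₁ ⊔ fvec σ₂ := by
  induction h₁ generalizing σ₂ M₂ with
  | nil => exact ⟨σ₂, M₂, hσ₂, h₂, funext fun s => by simp [fvec]⟩
  | @cons M M₁ t τ ht _ ih =>
    obtain ⟨M₂', h₂'⟩ := hnc.exists_fires_erase hσ₂ h₂ ht
    obtain ⟨σ', M', hσ', hf', hv⟩ :=
      ih (fun u hu => hσ₂ u (List.erase_subset hu)) h₂'
    refine ⟨σ', M', hσ', hf', funext fun s => ?_⟩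
    have hvs := congrFun hv s
    simp only [Pi.add_apply, Pi.sup_apply, fvec_erase, fvec_cons] at hvs ⊢
    split_ifs at hvs ⊢ <;> omega

theorem RI_confluent {Mb M₁ M₂ : Fin m → ℕ} (h₁ : M₁ ∈ N.RI TI Mb) (h₂ : M₂ ∈ N.RI TI Mb) :
    ∃ M ∈ N.RI TI M₁, M ∈ N.RI TI M₂ := by
  obtain ⟨σ₁, hσ₁, hf₁⟩ := h₁
  obtain ⟨σ₂, hσ₂, hf₂⟩ := h₂
  obtain ⟨ρ₁, M, hρ₁, hg₁, hv₁⟩ := hnc.exists_fires_fvec_add_eq_sup hσ₂ hf₁ hf₂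
  obtain ⟨ρ₂, M', hρ₂, hg₂, hv₂⟩ := hnc.exists_fires_fvec_add_eq_sup hσ₁ hf₂ hf₁
  have hM : M = M' := (hf₁.append hg₁).eq_of_fvec_eq (hf₂.append hg₂) <| by
    rw [fvec_append, fvec_append, hv₁, hv₂, sup_comm]
  exact ⟨M, ⟨ρ₁, hρ₁, hg₁⟩, hM ▸ ⟨ρ₂, hρ₂, hg₂⟩⟩

theorem fires_fire_of_not_mem {M M' : Fin m → ℕ} {σ : List (Fin n)} {t : Fin n}
    (hσ : ImplicitSeq TI σ) (htσ : t ∉ σ) (hf : N.fires M σ M') (ht : N.enabled M t)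
    (ht' : N.enabled M' t) : N.fires (N.fire M t) σ (N.fire M' t) := by
  obtain ⟨M'', hf''⟩ := hnc.exists_fires_erase hσ hf ht
  rw [List.erase_of_not_mem htσ] at hf''
  have hM : M'' = N.fire M' t := (fires.cons ht hf'').eq_of_fvec_eq
    (hf.append (fires_singleton ht'))
    (funext fun s => (List.perm_append_singleton t σ).count_eq s).symm
  rwa [hM] at hf''

end NonConflicting

theorem exists_minExplVec_le {M : Fin m → ℕ} {t : Fin n} {σ : List (Fin n)}
    (h : N.IsExplanation TI M t σ) :
    ∃ σ₀, N.IsExplanation TI M t σ₀ ∧ fvec σ₀ ≤ fvec σ ∧ N.MinExplVec TI M t (fvec σ₀) := by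
  obtain ⟨y, hy, ⟨σ₀, hσ₀, rfl⟩, hmin⟩ := exists_minimal_le_of_wellFoundedLT
    (fun y => ∃ σ', N.IsExplanation TI M t σ' ∧ fvec σ' = y) (fvec σ) ⟨σ, h, rfl⟩
  exact ⟨σ₀, hσ₀, hy, ⟨σ₀, hσ₀, rfl⟩,
    fun σ' h' hlt => hlt.not_ge (hmin ⟨σ', h', rfl⟩ hlt.le)⟩

theorem NonConflicting.exists_basis_fire_mem_RI {M0 Mb M : Fin m → ℕ} {t : Fin n}
    (hnc : N.NonConflicting TI) (hB : N.Basis TI M0 Mb) (hM : M ∈ N.RI TI Mb)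
    (ht : N.enabled M t) : ∃ Mb', N.Basis TI M0 Mb' ∧ N.fire M t ∈ N.RI TI Mb' := by
  obtain ⟨σ, hσ, hf⟩ := hM
  by_cases htI : t ∈ TI
  · refine ⟨Mb, hB, σ ++ [t], ?_, hf.append (fires_singleton ht)⟩
    simpa [ImplicitSeq, or_imp, forall_and] using ⟨hσ, htI⟩
  obtain ⟨σ₀, ⟨hσ₀, M₀, hf₀, ht₀⟩, hle, hmin⟩ := exists_minExplVec_le ⟨hσ, M, hf, ht⟩
  have hstep : N.BRGstep TI Mb (N.fire M₀ t) :=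
    ⟨t, htI, fvec σ₀, hmin, fun p => by rw [coe_fire ht₀, hf₀.stateEq p]⟩
  obtain ⟨ρ, M', hρ, hg, hv⟩ := hnc.exists_fires_fvec_add_eq_sup hσ hf₀ hf
  have hM' : M' = M := (hf₀.append hg).eq_of_fvec_eq hf <| by
    rw [fvec_append, hv, sup_eq_right.mpr hle]
  subst hM'
  exact ⟨_, hB.tail hstep, ρ, hρ,
    hnc.fires_fire_of_not_mem hρ (fun h => htI (hρ t h)) hg ht₀ ht⟩

theorem NonConflicting.exists_basis_mem_RI_of_fires {M0 Mb M M' : Fin m → ℕ}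
    {σ : List (Fin n)} (hnc : N.NonConflicting TI) (hf : N.fires M σ M')
    (hB : N.Basis TI M0 Mb) (hM : M ∈ N.RI TI Mb) :
    ∃ Mb', N.Basis TI M0 Mb' ∧ M' ∈ N.RI TI Mb' := by
  induction hf generalizing Mb with
  | nil => exact ⟨Mb, hB, hM⟩
  | cons ht _ ih =>
    obtain ⟨Mb', hB', hM'⟩ := hnc.exists_basis_fire_mem_RI hB hM ht
    exact ih hB' hM'

theorem NonIncreasing.weight_le_of_mem_RI {w : Fin m → ℤ} {M M' : Fin m → ℕ}
    (hni : N.NonIncreasing w TI) (h : M' ∈ N.RI TI M) :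
    ∑ p, w p * (M' p : ℤ) ≤ ∑ p, w p * (M p : ℤ) := by
  obtain ⟨σ, hσ, hf⟩ := h
  induction hf with
  | nil => rfl
  | @cons M M' t σ ht _ ih =>
    have hfire : ∑ p, w p * (N.fire M t p : ℤ) = ∑ p, w p * (M p : ℤ) + ∑ p, w p * N.C p t := by
      simp only [coe_fire ht, mul_add, Finset.sum_add_distrib]
    have := hni t (hσ t List.mem_cons_self)
    linarith [ih fun u hu => hσ u (List.mem_cons_of_mem t hu)]

end PetriNet

theorem nonblocking_of_all_basis_final_general {m n : ℕ} (N : PetriNet m n)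
    (TI : Set (Fin n)) (M0 : Fin m → ℕ) (w : Fin m → ℤ) (k : ℤ)
    (hnc : N.NonConflicting TI)
    (hni : N.NonIncreasing w TI)
    (hall : ∀ Mb, N.Basis TI M0 Mb → ∃ M ∈ N.RI TI Mb, Final w k M) :
    N.NonBlocking M0 w k := by
  rintro M ⟨σ, hf⟩
  obtain ⟨Mb, hB, hMb⟩ := hnc.exists_basis_mem_RI_of_fires hf .refl (mem_RI_self M0)
  obtain ⟨Mf, hMf, hfin⟩ := hall Mb hB
  obtain ⟨M', hM', hMf'⟩ := hnc.RI_confluent hMb hMf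
  exact ⟨M', RI_subset_Reach M hM', (hni.weight_le_of_mem_RI hMf').trans hfin⟩

/-- if the implicit reach of every basis marking of the CI-BRG
meets the final set, then the bounded plant is non-blocking. -/
theorem nonblocking_of_all_basis_final {m n : ℕ} (N : PetriNet m n)
    (TI : Set (Fin n)) (M0 : Fin m → ℕ) (w : Fin m → ℤ) (k : ℤ)
    (hb : N.Bounded M0)
    (hacyc : N.SubnetAcyclic TI) (hnc : N.NonConflicting TI)
    (hni : N.NonIncreasing w TI)
    (hall : ∀ Mb, N.Basis TI M0 Mb → ∃ M ∈ N.RI TI Mb, Final w k M) :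
    N.NonBlocking M0 w k :=
  nonblocking_of_all_basis_final_general N TI M0 w k hnc hni hall
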